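/- There is no U(1)-equivariant unital ∗-algebra homomorphism f : O(SU_q(2)) → C(S³) for 0 < q < 1, where O(SU_q(2)) carries the right U(1)-coaction α ↦ α ⊗ u, γ ↦ γ ⊗ u and C(S³) the diagonal U(1)-action: equivalently, there is no unital ∗-homomorphism f with f(α) ∈ Γ(L₁) and f(γ) ∈ Γ(L₁). -/

import Mathlib

/-- The 3-sphere, realized as the unit sphere in `ℂ²`. -/
abbrev S3 : Type := {p : ℂ × ℂ // ‖p.1‖ ^ 2 + ‖p.2‖ ^ 2 = 1}

/-- The first coordinate function `a : S³ → ℂ`. -/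
def aF (x : S3) : ℂ := x.1.1

/-- The second coordinate function `c : S³ → ℂ`. -/
def cF (x : S3) : ℂ := x.1.2

/-- `ω := √(2/(1 + ||a|² − |c|²|))`, a `U(1)`-invariant function on `S³`. -/
noncomputable def omegaF (x : S3) : ℝ :=
  Real.sqrt (2 / (1 + |‖aF x‖ ^ 2 - ‖cF x‖ ^ 2|))

/-- Two points of `S³` are in the same orbit of the diagonal `U(1)`-action. -/
def U1Rel (x y : S3) : Prop :=
  ∃ z : ℂ, ‖z‖ = 1 ∧ (y : ℂ × ℂ) = (z * (x : ℂ × ℂ).1, z * (x : ℂ × ℂ).2)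

/-- A function on `S³` is `U(1)`-invariant (i.e., descends to `S² = S³/U(1)`). -/
def U1Invariant (f : S3 → ℂ) : Prop := ∀ x y : S3, U1Rel x y → f y = f x

/-- A function on `S³` is `U(1)`-equivariant of degree 1, i.e., is a continuous section of the
Hopf line bundle `L₁`: `s(λx) = λ s(x)`. -/
def U1Equivariant (s : S3 → ℂ) : Prop :=
  ∀ (x y : S3) (z : ℂ), ‖z‖ = 1 →
    (y : ℂ × ℂ) = (z * (x : ℂ × ℂ).1, z * (x : ℂ × ℂ).2) → s y = z * s x

/-!
If `f(α)` vanished at a point, the two unitarity relations would give `|f(γ)|² = 1` and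
`q² |f(γ)|² = 1` there, impossible for `q² ≠ 1`; so `f(α)` is a nowhere-vanishing section of
the Hopf bundle `L₁`. Such a section does not exist: pull it back along
`φ(s, t) = (cos s · e^{it}, sin s)` and take a continuous logarithm `L` on the simply connected
plane. The increment `L(s, 2π) - L(s, 0)` lies in `2πiℤ`, hence does not depend on `s`; by
equivariance it is `2πi` on the Hopf fibre `s = 0`, but `0` at `s = π/2`, where `φ(π/2, ·)` is
constant.
-/

open Complex
open scoped Real

theorem Complex.exists_continuous_exp_eq {X : Type*} [TopologicalSpace X]
    [SimplyConnectedSpace X] [LocallyPathConnectedSpace X] {f : X → ℂ} (hf : Continuous f)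
    (hf₀ : ∀ x, f x ≠ 0) : ∃ L : X → ℂ, Continuous L ∧ ∀ x, exp (L x) = f x := by
  obtain ⟨x₀⟩ := (inferInstance : Nonempty X)
  obtain ⟨L, ⟨-, hL⟩, -⟩ := isCoveringMapOn_exp.existsUnique_continuousMap_lifts ⟨f, hf⟩
    (exp_log (hf₀ x₀)) hf₀
  exact ⟨L, L.continuous, congr_fun hL⟩

theorem Complex.apply_eq_of_exp_comp_const {X : Type*} [TopologicalSpace X]
    [PreconnectedSpace X] {L : X → ℂ} (hL : Continuous L)
    (h : ∀ x y, exp (L x) = exp (L y)) (x y : X) : L x = L y :=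
  isCoveringMap_exp.const_of_comp hL (fun x y ↦ Subtype.ext (h x y)) x y

noncomputable def sphereChart (p : ℝ × ℝ) : S3 :=
  ⟨((Real.cos p.1 : ℂ) * exp (p.2 * I), (Real.sin p.1 : ℂ)), by
    rw [norm_mul, norm_exp_ofReal_mul_I, mul_one, norm_real, norm_real, Real.norm_eq_abs,
      Real.norm_eq_abs, sq_abs, sq_abs, Real.cos_sq_add_sin_sq]⟩

theorem continuous_sphereChart : Continuous sphereChart := by
  unfold sphereChart; fun_prop

theorem sphereChart_zero (t : ℝ) :
    (sphereChart (0, t) : ℂ × ℂ) = (exp (t * I) * (sphereChart (0, 0) : ℂ × ℂ).1,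
      exp (t * I) * (sphereChart (0, 0) : ℂ × ℂ).2) := by
  simp [sphereChart, mul_comm]

theorem sphereChart_pi_div_two (t : ℝ) : sphereChart (π / 2, t) = sphereChart (π / 2, 0) := by
  simp [sphereChart]

theorem sphereChart_two_pi (s : ℝ) : sphereChart (s, 2 * π) = sphereChart (s, 0) := by
  simp [sphereChart]

theorem U1Equivariant.exists_eq_zero {A : S3 → ℂ} (hA : Continuous A) (hAeq : U1Equivariant A) :
    ∃ x, A x = 0 := by
  by_contra! hA₀
  obtain ⟨L, hL, hexp⟩ := exists_continuous_exp_eq (hA.comp continuous_sphereChart)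
    fun p ↦ hA₀ (sphereChart p)
  simp only [Function.comp_apply] at hexp
  have hmonodromy (s : ℝ) : L (s, 2 * π) - L (s, 0) = L (0, 2 * π) - L (0, 0) :=
    apply_eq_of_exp_comp_const (L := fun s : ℝ ↦ L (s, 2 * π) - L (s, 0)) (by fun_prop)
      (fun s s' ↦ by simp only [exp_sub, hexp, sphereChart_two_pi, div_self (hA₀ _)]) s 0
  have hfiber : L (0, 2 * π) - L (0, 0) = 2 * π * I := by
    have hexp_fiber (t : ℝ) : exp (L (0, t) - t * I) = A (sphereChart (0, 0)) := by
      rw [exp_sub, hexp, hAeq _ _ _ (norm_exp_ofReal_mul_I t) (sphereChart_zero t),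
        mul_div_cancel_left₀ _ (exp_ne_zero _)]
    have := apply_eq_of_exp_comp_const (L := fun t : ℝ ↦ L (0, t) - t * I) (by fun_prop)
      (fun t t' ↦ (hexp_fiber t).trans (hexp_fiber t').symm) (2 * π) 0
    push_cast at this
    linear_combination this
  have hpole : L (π / 2, 2 * π) - L (π / 2, 0) = 0 := by
    rw [sub_eq_zero]
    exact apply_eq_of_exp_comp_const (L := fun t : ℝ ↦ L (π / 2, t)) (by fun_prop)
      (fun t t' ↦ by simp only [hexp, sphereChart_pi_div_two]) _ _
  have := (hmonodromy (π / 2)).symm.trans hpole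
  rw [hfiber] at this
  simp [Real.pi_ne_zero] at this

theorem ne_zero_of_suq2_relations {R : Type*} [CommRing R] [Star R] {q a c : R}
    (hq : q ^ 2 ≠ 1) (h₁ : star a * a + star c * c = 1)
    (h₂ : a * star a + q ^ 2 * (c * star c) = 1) : a ≠ 0 := by
  rintro rfl
  refine hq ?_
  linear_combination h₂ - q ^ 2 * h₁

/-- For `0 < q < 1` there is no `U(1)`-equivariant unital ∗-homomorphism
`O(SU_q(2)) → C(S³)`. Equivalently: there are no continuous `U(1)`-equivariant functions
`A, G : S³ → ℂ` (the would-be images of the generators `α`, `γ`, both lying in `Γ(L₁)`)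
satisfying the defining relations of `O(SU_q(2))` pointwise. -/
theorem no_equivariant_hom_from_suq2 (q : ℝ) (hq : 0 < q) (hq1 : q < 1) :
    ¬ ∃ A G : S3 → ℂ, Continuous A ∧ Continuous G ∧
      U1Equivariant A ∧ U1Equivariant G ∧
      (∀ x : S3, A x * G x = (q : ℂ) * (G x * A x)) ∧
      (∀ x : S3, A x * star (G x) = (q : ℂ) * (star (G x) * A x)) ∧
      (∀ x : S3, G x * star (G x) = star (G x) * G x) ∧
      (∀ x : S3, star (A x) * A x + star (G x) * G x = 1) ∧
      (∀ x : S3, A x * star (A x) + (q : ℂ) ^ 2 * (G x * star (G x)) = 1) := by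
  rintro ⟨A, G, hA, -, hAeq, -, -, -, -, hunit₁, hunit₂⟩
  have hq2 : (q : ℂ) ^ 2 ≠ 1 := by
    exact_mod_cast (pow_lt_one₀ hq.le hq1 two_ne_zero).ne
  obtain ⟨x, hx⟩ := hAeq.exists_eq_zero hA
  exact ne_zero_of_suq2_relations hq2 (hunit₁ x) (hunit₂ x) hx
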